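/- Let G be a reaction network on species X, let ℰ ⊆ X be a set of independently conserved species, each closed in G, and let G' be a network obtained from G by adding, for each E ∈ ℰ, a (possibly empty) subset of the two flow reactions {0→E, E→0}. If for some E ∈ ℰ the inflow 0→E is a reaction of G' but the outflow E→0 is not, then for every choice of reaction rates κ the mass action system (G', κ) has no positive steady states. -/
import Mathlib


/-- A reaction `y → y'` is a pair of complexes, each a vector of
nonnegative integer coefficients indexed by the species: the source and the target. -/
abbrev Reaction (S : Type) : Type := (S → ℕ) × (S → ℕ)

section General

variable {S : Type} [Fintype S] [DecidableEq S]

/-- The complex consisting of a single copy of species `s`. -/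
def unitC (s : S) : S → ℕ := fun t => if t = s then 1 else 0

/-- The complex `a + b`. -/
def pairC (a b : S) : S → ℕ := fun t => (if t = a then 1 else 0) + (if t = b then 1 else 0)

/-- The mass action right-hand side `f_κ` of a network `R` with rates `κ`. -/
def massAction (R : Finset (Reaction S)) (κ : Reaction S → ℝ) (x : S → ℝ) : S → ℝ :=
  fun s => ∑ r ∈ R, κ r * (∏ t, x t ^ r.1 t) * ((r.2 s : ℝ) - (r.1 s : ℝ))

/-- The stoichiometric subspace of a network: the span of its reaction vectors. -/
def stoichSubspace (R : Finset (Reaction S)) : Submodule ℝ (S → ℝ) :=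
  Submodule.span ℝ ((fun r : Reaction S => fun s => ((r.2 s : ℝ) - (r.1 s : ℝ))) '' ↑R)

/-- A positive steady state of the mass action system `(R, κ)`. -/
def isPosSteadyState (R : Finset (Reaction S)) (κ : Reaction S → ℝ) (x : S → ℝ) : Prop :=
  (∀ s, 0 < x s) ∧ massAction R κ x = 0

/-- A steady state is nondegenerate if the kernel of the Jacobian of the mass action
right-hand side intersects the stoichiometric subspace trivially. -/
def nondegenerate (R : Finset (Reaction S)) (κ : Reaction S → ℝ) (x : S → ℝ) : Prop :=
  ∀ v ∈ stoichSubspace R, fderiv ℝ (massAction R κ) x v = 0 → v = 0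

/-- A network admits nondegenerate multistationarity if for some positive rates there are
two distinct nondegenerate positive steady states in the same stoichiometric
compatibility class. -/
def admitsNondegMultistationarity (R : Finset (Reaction S)) : Prop :=
  ∃ κ : Reaction S → ℝ, (∀ r ∈ R, 0 < κ r) ∧
    ∃ x y : S → ℝ, x ≠ y ∧
      isPosSteadyState R κ x ∧ isPosSteadyState R κ y ∧
      nondegenerate R κ x ∧ nondegenerate R κ y ∧
      y - x ∈ stoichSubspace R

/-- The inflow reaction `0 → s`. -/
def inflow (s : S) : Reaction S := (fun _ => 0, unitC s)

/-- The outflow reaction `s → 0`. -/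
def outflow (s : S) : Reaction S := (unitC s, fun _ => 0)

/-- The open network on `E`: add inflow and outflow reactions for every species of `E`. -/
def openOn (R : Finset (Reaction S)) (E : Finset S) : Finset (Reaction S) :=
  R ∪ E.image inflow ∪ E.image outflow

/-- A conservation law: a vector orthogonal to the stoichiometric subspace. -/
def conservationLaw (R : Finset (Reaction S)) (w : S → ℝ) : Prop :=
  ∀ v ∈ stoichSubspace R, ∑ s, w s * v s = 0

/-- A set `E` of species is independently conserved in `R` if there are conservation laws
`L e` for `e ∈ E` such that `L e` has a nonzero coordinate at `e` and zero coordinate at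
`e` for every other `L e'`, `e' ∈ E`. -/
def IndepConserved (R : Finset (Reaction S)) (E : Finset S) : Prop :=
  ∃ L : S → (S → ℝ), ∀ e ∈ E,
    conservationLaw R (L e) ∧ L e e ≠ 0 ∧ ∀ e' ∈ E, e' ≠ e → L e' e = 0

/-- A species is closed in `R` if neither its inflow nor its outflow is a reaction of `R`. -/
def ClosedIn (R : Finset (Reaction S)) (s : S) : Prop :=
  inflow s ∉ R ∧ outflow s ∉ R

/-- Projection of a complex onto the coordinates outside `E`. -/
def projC (E : Finset S) (y : S → ℕ) : {s : S // s ∉ E} → ℕ := fun s => y s.val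

/-- Projection of a reaction onto the coordinates outside `E`. -/
def projR (E : Finset S) (r : Reaction S) : Reaction {s : S // s ∉ E} :=
  (projC E r.1, projC E r.2)

/-- The projected network `G₋E` on the species outside `E`: project all reactions and
remove self-loops. -/
def projNet (R : Finset (Reaction S)) (E : Finset S) : Finset (Reaction {s : S // s ∉ E}) :=
  (R.image (projR E)).filter fun r => r.1 ≠ r.2

/-- Inclusion of a reaction on the species of `E` into a reaction on all of `S`. -/
def inclR (E : Finset S) (r : Reaction {s : S // s ∈ E}) : Reaction S :=
  (fun s => if h : s ∈ E then r.1 ⟨s, h⟩ else 0,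
   fun s => if h : s ∈ E then r.2 ⟨s, h⟩ else 0)

/-- `R` has at most `l` positive steady states in each stoichiometric compatibility class,
for every choice of positive reaction rates: there is no injective family of `l + 1`
positive steady states lying pairwise in the same compatibility class. -/
def atMostPosSS (R : Finset (Reaction S)) (l : ℕ) : Prop :=
  ∀ κ : Reaction S → ℝ, (∀ r ∈ R, 0 < κ r) →
    ∀ f : Fin (l + 1) → (S → ℝ),
      (∀ j, isPosSteadyState R κ (f j)) →
      (∀ j k, f k - f j ∈ stoichSubspace R) →
      ¬ Function.Injective f

/-- Monostationarity: at most one positive steady state in each stoichiometric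
compatibility class, for every choice of positive rates. -/
def monostationary (R : Finset (Reaction S)) : Prop :=
  atMostPosSS R 1

end General

/-- Species of the sequential `n`-site phosphorylation–dephosphorylation cycle:
the enzymes `E`, `F`, the substrates `S i` for `i = 0, …, n`, and the intermediates
`ES i` for `i = 0, …, n-1` and `FS i` (denoting `FS_{i+1}`) for `i = 0, …, n-1`. -/
inductive PS (n : ℕ) : Type
  | E : PS n
  | F : PS n
  | S : Fin (n + 1) → PS n
  | ES : Fin n → PS n
  | FS : Fin n → PS n
deriving DecidableEq, Fintype

/-- The sequential `n`-site phosphorylation–dephosphorylation cycle `𝒫ⁿ`, with the `6n`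
reactions `S_i + E ⇌ ES_i`, `ES_i → S_{i+1} + E` for `i = 0, …, n-1` and
`S_i + F ⇌ FS_i`, `FS_i → S_{i-1} + F` for `i = 1, …, n`. -/
def Pcycle (n : ℕ) : Finset (Reaction (PS n)) :=
  (Finset.univ.image fun i : Fin n => (pairC (PS.S i.castSucc) PS.E, unitC (PS.ES i))) ∪
  (Finset.univ.image fun i : Fin n => (unitC (PS.ES i), pairC (PS.S i.castSucc) PS.E)) ∪
  (Finset.univ.image fun i : Fin n => (unitC (PS.ES i), pairC (PS.S i.succ) PS.E)) ∪
  (Finset.univ.image fun i : Fin n => (pairC (PS.S i.succ) PS.F, unitC (PS.FS i))) ∪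
  (Finset.univ.image fun i : Fin n => (unitC (PS.FS i), pairC (PS.S i.succ) PS.F)) ∪
  (Finset.univ.image fun i : Fin n => (unitC (PS.FS i), pairC (PS.S i.castSucc) PS.F))


section Aux

variable {S : Type} [Fintype S] [DecidableEq S]

lemma unitC_self (s : S) : unitC s s = 1 := by simp [unitC]

lemma inflow_injective : Function.Injective (inflow (S := S)) := by
  intro a b h
  by_contra hne
  have := congrFun (congrArg Prod.snd h) a
  simp [inflow, unitC, hne] at this

lemma outflow_injective : Function.Injective (outflow (S := S)) := by
  intro a b h
  by_contra hne
  have := congrFun (congrArg Prod.fst h) a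
  simp [outflow, unitC, hne] at this

lemma inflow_ne_outflow (a b : S) : inflow a ≠ outflow b := by
  intro h
  have := congrFun (congrArg Prod.fst h) b
  simp [inflow, outflow, unitC] at this

lemma massAction_mem_stoich (R : Finset (Reaction S)) (κ : Reaction S → ℝ) (x : S → ℝ) :
    massAction R κ x ∈ stoichSubspace R := by
  have : massAction R κ x =
      ∑ r ∈ R, (κ r * ∏ t, x t ^ r.1 t) •
        (fun s => ((r.2 s : ℝ) - (r.1 s : ℝ))) := by
    funext s
    simp [massAction, Finset.sum_apply, mul_comm, mul_assoc, mul_left_comm]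
  rw [this]
  refine Submodule.sum_mem _ fun r hr => Submodule.smul_mem _ _ ?_
  exact Submodule.subset_span ⟨r, hr, rfl⟩

lemma weighted_sum_massAction (R : Finset (Reaction S)) (κ : Reaction S → ℝ)
    (x w : S → ℝ) :
    ∑ s, w s * massAction R κ x s =
      ∑ r ∈ R, κ r * (∏ t, x t ^ r.1 t) * (∑ s, w s * ((r.2 s : ℝ) - (r.1 s : ℝ))) := by
  simp only [massAction, Finset.mul_sum]
  rw [Finset.sum_comm]
  refine Finset.sum_congr rfl fun r _ => ?_
  refine Finset.sum_congr rfl fun s _ => by ring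

lemma sum_mul_unitC (w : S → ℝ) (a : S) :
    ∑ s, w s * ((unitC a s : ℝ)) = w a := by
  simp [unitC, apply_ite (fun n : ℕ => (n : ℝ)), mul_ite]

end Aux

/-- Let `E` be a set of independently conserved species, each closed in
`G`, and let `G'` add, for each species of `E`, a (possibly empty) subset of its two flow
reactions. If for some `e ∈ E` the inflow `0 → e` is a reaction of `G'` but the outflow
`e → 0` is not, then for every choice of positive rates the mass action system of `G'`
has no positive steady states. -/
theorem partial_open_inflow_no_steady_state {S : Type} [Fintype S] [DecidableEq S]
    (R : Finset (Reaction S)) (E : Finset S)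
    (hIC : IndepConserved R E) (hCl : ∀ e ∈ E, ClosedIn R e)
    (A B : Finset S) (hA : A ⊆ E) (hB : B ⊆ E)
    (e : S) (he : e ∈ E)
    (hin : inflow e ∈ R ∪ A.image inflow ∪ B.image outflow)
    (hout : outflow e ∉ R ∪ A.image inflow ∪ B.image outflow)
    (κ : Reaction S → ℝ)
    (hκ : ∀ r ∈ R ∪ A.image inflow ∪ B.image outflow, 0 < κ r) :
    ¬ ∃ x : S → ℝ, isPosSteadyState (R ∪ A.image inflow ∪ B.image outflow) κ x := by
  
  rintro ⟨x, hxpos, hss⟩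
  obtain ⟨L, hL⟩ := hIC
  set w : S → ℝ := L e with hw
  have hwcons : conservationLaw R w := (hL e he).1
  have hwe : w e ≠ 0 := (hL e he).2.1
  have hwzero : ∀ s ∈ E, s ≠ e → w s = 0 := by
    intro s hs hse
    exact (hL s hs).2.2 e he (Ne.symm hse)
  -- e ∈ A and e ∉ B
  have hCle := hCl e he
  have heA : e ∈ A := by
    rcases Finset.mem_union.1 hin with h | h
    · rcases Finset.mem_union.1 h with h | h
      · exact absurd h hCle.1
      · obtain ⟨a, ha, hae⟩ := Finset.mem_image.1 h
        rwa [inflow_injective hae] at ha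
    · obtain ⟨b, _, hbe⟩ := Finset.mem_image.1 h
      exact absurd hbe.symm (inflow_ne_outflow e b)
  have heB : e ∉ B := by
    intro hb
    exact hout (Finset.mem_union.2 (Or.inr (Finset.mem_image.2 ⟨e, hb, rfl⟩)))
  -- disjointness
  have hdRI : Disjoint R (A.image inflow) := by
    rw [Finset.disjoint_right]
    rintro r hr hrR
    obtain ⟨a, ha, rfl⟩ := Finset.mem_image.1 hr
    exact (hCl a (hA ha)).1 hrR
  have hdRO : Disjoint (R ∪ A.image inflow) (B.image outflow) := by
    rw [Finset.disjoint_right]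
    rintro r hr hrR
    obtain ⟨b, hb, rfl⟩ := Finset.mem_image.1 hr
    rcases Finset.mem_union.1 hrR with h | h
    · exact (hCl b (hB hb)).2 h
    · obtain ⟨a, _, hab⟩ := Finset.mem_image.1 h
      exact inflow_ne_outflow a b hab
  -- weighted sum is zero
  set G' := R ∪ A.image inflow ∪ B.image outflow with hG'
  have h0 : ∑ s, w s * massAction G' κ x s = 0 := by
    rw [hss]; simp
  rw [weighted_sum_massAction, hG', Finset.sum_union hdRO, Finset.sum_union hdRI]
      at h0
  -- the R part vanishes
  have hRpart : ∑ r ∈ R, κ r * (∏ t, x t ^ r.1 t) *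
      (∑ s, w s * ((r.2 s : ℝ) - (r.1 s : ℝ))) = 0 := by
    rw [← weighted_sum_massAction]
    exact hwcons _ (massAction_mem_stoich R κ x)
  rw [hRpart, zero_add] at h0
  -- the A part
  have hApart : ∑ r ∈ A.image inflow, κ r * (∏ t, x t ^ r.1 t) *
      (∑ s, w s * ((r.2 s : ℝ) - (r.1 s : ℝ))) = κ (inflow e) * w e := by
    rw [Finset.sum_image (fun a _ b _ h => inflow_injective h)]
    rw [Finset.sum_eq_single e]
    · simp [inflow, sum_mul_unitC]
    · intro a ha hae
      have : w a = 0 := hwzero a (hA ha) hae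
      simp [inflow, sum_mul_unitC, this]
    · intro h; exact absurd heA h
  -- the B part
  have hBpart : ∑ r ∈ B.image outflow, κ r * (∏ t, x t ^ r.1 t) *
      (∑ s, w s * ((r.2 s : ℝ) - (r.1 s : ℝ))) = 0 := by
    rw [Finset.sum_image (fun a _ b _ h => outflow_injective h)]
    refine Finset.sum_eq_zero fun b hb => ?_
    have hbe : b ≠ e := fun h => heB (h ▸ hb)
    have : w b = 0 := hwzero b (hB hb) hbe
    simp [outflow, sum_mul_unitC, this]
  rw [hApart, hBpart, add_zero] at h0
  have hκe : 0 < κ (inflow e) :=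
    hκ _ (Finset.mem_union.2 (Or.inl (Finset.mem_union.2
      (Or.inr (Finset.mem_image.2 ⟨e, heA, rfl⟩)))))
  exact hwe (by
    have := mul_eq_zero.1 h0
    rcases this with h | h
    · exact absurd h hκe.ne'
    · exact h)
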